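/- Kusmin–Landau first derivative test: let I be an interval of ℝ and f : I → ℝ a C¹ function with f' monotone. If λ₁ > 0 satisfies λ₁ ≤ dist(f'(x), ℤ) for all x ∈ I, then |∑_{n ∈ I ∩ ℤ} e(f(n))| ≤ C/λ₁ for an absolute constant C. -/

import Mathlib

/-!
Subtracting `k x` for a suitable integer `k` (the continuous derivative never meets `ℤ`, so it
stays in one interval `(k, k + 1)`) we may assume `f' ∈ [λ, 1 - λ]`. By the mean value theorem and
convexity, the increments `δⱼ = f(nⱼ₊₁) - f(nⱼ)` then lie in `[λ, 1 - λ]` and are monotone.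
The identity `e(x) + e(x + δ) = -i cot(πδ) (e(x + δ) - e(x))` writes twice the sum as two boundary
terms plus `∑ cⱼ (e(f(nⱼ₊₁)) - e(f(nⱼ)))` with `cⱼ = cot(π δⱼ)`, a monotone sequence bounded by
`1/(2λ)`; Abel summation bounds this by `|c_last| + |c_last - c₀|` up to a factor `2`.
-/

noncomputable def e (x : ℝ) : ℂ := Complex.exp (2 * Real.pi * Complex.I * x)

open Real Complex Finset

lemma e_add (x y : ℝ) : e (x + y) = e x * e y := by
  rw [e, e, e, ← Complex.exp_add]
  push_cast
  ring_nf

lemma norm_e (x : ℝ) : ‖e x‖ = 1 := by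
  rw [e, Complex.norm_exp]
  simp

lemma e_intCast (n : ℤ) : e n = 1 := by
  rw [e, ← Complex.exp_int_mul_two_pi_mul_I n]
  push_cast
  ring_nf

lemma e_sub_intCast (x : ℝ) (n : ℤ) : e (x - n) = e x := by
  rw [← mul_one (e (x - n)), ← e_intCast n, ← e_add, sub_add_cancel]

lemma sin_mul_e_add_one (δ : ℝ) :
    (Real.sin (π * δ) : ℂ) * (e δ + 1) = -I * Real.cos (π * δ) * (e δ - 1) := by
  have h : e δ = Complex.exp (↑(π * δ) * I) ^ 2 := by
    rw [e, ← Complex.exp_nat_mul]; push_cast; ring_nf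
  have hsc : (Real.sin (π * δ) : ℂ) ^ 2 + (Real.cos (π * δ) : ℂ) ^ 2 = 1 := by
    exact_mod_cast Real.sin_sq_add_cos_sq (π * δ)
  rw [h, Complex.exp_mul_I, ← Complex.ofReal_cos, ← Complex.ofReal_sin]
  set s : ℂ := (Real.sin (π * δ) : ℂ)
  set c : ℂ := (Real.cos (π * δ) : ℂ)
  linear_combination (s ^ 3 + 2 * c ^ 2 * s + I * c * s ^ 2) * I_sq - (s - I * c) * hsc

lemma e_add_e_eq_cot_smul_sub (x δ : ℝ) (hδ : Real.sin (π * δ) ≠ 0) :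
    e x + e (x + δ) = -I * (Real.cot (π * δ) • (e (x + δ) - e x)) := by
  have key := sin_mul_e_add_one δ
  rw [e_add, Complex.real_smul, Real.cot_eq_cos_div_sin, Complex.ofReal_div]
  have : (Real.sin (π * δ) : ℂ) ≠ 0 := by exact_mod_cast hδ
  field_simp
  linear_combination e x * key

lemma two_mul_min_le_sin_pi_mul {δ : ℝ} (h0 : 0 ≤ δ) (h1 : δ ≤ 1) :
    2 * min δ (1 - δ) ≤ Real.sin (π * δ) := by
  wlog hδ : δ ≤ 1 / 2 generalizing δ
  · have := this (δ := 1 - δ) (by linarith) (by linarith) (by linarith)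
    rwa [sub_sub_cancel, min_comm, mul_sub, mul_one, Real.sin_pi_sub] at this
  have := Real.mul_le_sin (x := π * δ) (by positivity) (by nlinarith [Real.pi_pos])
  rw [← mul_assoc, div_mul_cancel₀ _ Real.pi_ne_zero] at this
  linarith [min_le_left δ (1 - δ)]

lemma abs_cot_pi_mul_le {lam δ : ℝ} (hlam : 0 < lam) (hδ : δ ∈ Set.Icc lam (1 - lam)) :
    |Real.cot (π * δ)| ≤ 1 / (2 * lam) := by
  have hsin : 2 * lam ≤ Real.sin (π * δ) :=
    (mul_le_mul_of_nonneg_left (le_min hδ.1 (by linarith [hδ.2])) zero_le_two).trans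
      (two_mul_min_le_sin_pi_mul (by linarith [hδ.1]) (by linarith [hδ.2]))
  rw [Real.cot_eq_cos_div_sin, abs_div, abs_of_pos (a := Real.sin _) (by linarith)]
  exact div_le_div₀ zero_le_one (Real.abs_cos_le_one _) (by positivity) hsin

lemma Real.antitoneOn_cot : AntitoneOn Real.cot (Set.Ioo 0 π) := by
  intro x hx y hy hxy
  have hsx := Real.sin_pos_of_pos_of_lt_pi hx.1 hx.2
  have hsy := Real.sin_pos_of_pos_of_lt_pi hy.1 hy.2
  have : 0 ≤ Real.sin (y - x) :=
    Real.sin_nonneg_of_nonneg_of_le_pi (by linarith) (by linarith [hx.1, hy.2])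
  rw [Real.cot_eq_cos_div_sin, Real.cot_eq_cos_div_sin, div_le_div_iff₀ hsy hsx]
  rw [Real.sin_sub] at this
  linarith

lemma sum_range_abs_sub_eq_abs_sub (c : ℕ → ℝ) (m : ℕ)
    (hc : (∀ j < m, c j ≤ c (j + 1)) ∨ (∀ j < m, c (j + 1) ≤ c j)) :
    ∑ j ∈ range m, |c (j + 1) - c j| = |c m - c 0| := by
  rcases hc with hc | hc
  · have h : ∑ j ∈ range m, |c (j + 1) - c j| = c m - c 0 := by
      rw [← sum_range_sub]
      exact sum_congr rfl fun j hj => abs_of_nonneg (sub_nonneg.2 (hc j (mem_range.1 hj)))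
    rw [← h, abs_of_nonneg (sum_nonneg fun j _ => abs_nonneg _)]
  · have h : ∑ j ∈ range m, |c (j + 1) - c j| = c 0 - c m := by
      rw [← neg_sub, ← sum_range_sub, ← sum_neg_distrib]
      exact sum_congr rfl fun j hj => abs_of_nonpos (sub_nonpos.2 (hc j (mem_range.1 hj)))
    rw [abs_sub_comm, ← h, abs_of_nonneg (sum_nonneg fun j _ => abs_nonneg _)]

section Abel

variable {E : Type*} [SeminormedAddCommGroup E] [NormedSpace ℝ E]

lemma norm_sum_smul_sub_le (c : ℕ → ℝ) (A : ℕ → E) (n : ℕ) (hA : ∀ j ≤ n, ‖A j‖ ≤ 1) :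
    ‖∑ j ∈ range n, c j • (A (j + 1) - A j)‖ ≤
      2 * (|c (n - 1)| + ∑ j ∈ range (n - 1), |c (j + 1) - c j|) := by
  have hG : ∀ i ≤ n, ‖∑ j ∈ range i, (A (j + 1) - A j)‖ ≤ 2 := fun i hi => by
    rw [sum_range_sub]
    linarith [norm_sub_le (A i) (A 0), hA i hi, hA 0 (Nat.zero_le n)]
  rw [sum_range_by_parts]
  refine (norm_sub_le _ _).trans ?_
  rw [mul_add, mul_sum]
  gcongr
  · rw [norm_smul, Real.norm_eq_abs, mul_comm]
    gcongr
    exact hG n (by omega)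
  · refine (norm_sum_le _ _).trans (sum_le_sum fun j hj => ?_)
    rw [norm_smul, Real.norm_eq_abs, mul_comm]
    gcongr
    exact hG _ (by have := mem_range.1 hj; omega)

lemma norm_sum_smul_sub_le_of_monotone_or_antitone (c : ℕ → ℝ) (A : ℕ → E) (n : ℕ) {B : ℝ}
    (hB : 0 ≤ B) (hcB : ∀ j < n, |c j| ≤ B)
    (hc : (∀ j, j + 1 < n → c j ≤ c (j + 1)) ∨ (∀ j, j + 1 < n → c (j + 1) ≤ c j))
    (hA : ∀ j ≤ n, ‖A j‖ ≤ 1) :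
    ‖∑ j ∈ range n, c j • (A (j + 1) - A j)‖ ≤ 6 * B := by
  rcases n with _ | m
  · simpa using hB
  have hvar := sum_range_abs_sub_eq_abs_sub c m (by simpa only [Nat.add_lt_add_iff_right] using hc)
  have := norm_sum_smul_sub_le c A (m + 1) hA
  rw [Nat.add_sub_cancel, hvar] at this
  linarith [abs_sub (c m) (c 0), hcB m (by omega), hcB 0 (by omega)]

end Abel

lemma Finset.two_nsmul_sum_range_succ {M : Type*} [AddCommMonoid M] (u : ℕ → M) (n : ℕ) :
    2 • ∑ j ∈ range (n + 1), u j = u 0 + u n + ∑ j ∈ range n, (u j + u (j + 1)) := by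
  rw [sum_add_distrib, two_nsmul]
  nth_rw 1 [sum_range_succ]
  rw [sum_range_succ']
  abel

lemma sin_pi_mul_pos {δ : ℝ} (h0 : 0 < δ) (h1 : δ < 1) : 0 < Real.sin (π * δ) :=
  Real.sin_pos_of_pos_of_lt_pi (by positivity) (by nlinarith [Real.pi_pos])

theorem norm_sum_e_le_of_sub_mem_Icc (x : ℕ → ℝ) (n : ℕ) {lam : ℝ} (hlam : 0 < lam)
    (hx : ∀ j < n, x (j + 1) - x j ∈ Set.Icc lam (1 - lam))
    (hmono : (∀ j, j + 1 < n → x (j + 1) - x j ≤ x (j + 2) - x (j + 1)) ∨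
      (∀ j, j + 1 < n → x (j + 2) - x (j + 1) ≤ x (j + 1) - x j)) :
    ‖∑ j ∈ range (n + 1), e (x j)‖ ≤ 1 + 3 / (2 * lam) := by
  set c : ℕ → ℝ := fun j => Real.cot (π * (x (j + 1) - x j))
  have hx01 : ∀ j < n, x (j + 1) - x j ∈ Set.Ioo 0 1 := fun j hj =>
    ⟨by linarith [(hx j hj).1], by linarith [(hx j hj).2]⟩
  have hpair : ∀ j < n, e (x j) + e (x (j + 1)) = -I * (c j • (e (x (j + 1)) - e (x j))) := by
    intro j hj
    have := e_add_e_eq_cot_smul_sub (x j) (x (j + 1) - x j)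
      (sin_pi_mul_pos (hx01 j hj).1 (hx01 j hj).2).ne'
    rwa [add_sub_cancel] at this
  have hπ : ∀ j < n, π * (x (j + 1) - x j) ∈ Set.Ioo 0 π := fun j hj =>
    ⟨by nlinarith [Real.pi_pos, (hx01 j hj).1], by nlinarith [Real.pi_pos, (hx01 j hj).2]⟩
  have hc : (∀ j, j + 1 < n → c j ≤ c (j + 1)) ∨ (∀ j, j + 1 < n → c (j + 1) ≤ c j) := by
    rcases hmono with h | h
    · exact Or.inr fun j hj => Real.antitoneOn_cot (hπ j (by omega)) (hπ (j + 1) hj)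
        (mul_le_mul_of_nonneg_left (h j hj) Real.pi_pos.le)
    · exact Or.inl fun j hj => Real.antitoneOn_cot (hπ (j + 1) hj) (hπ j (by omega))
        (mul_le_mul_of_nonneg_left (h j hj) Real.pi_pos.le)
  have habel := norm_sum_smul_sub_le_of_monotone_or_antitone c (fun j => e (x j)) n
    (by positivity) (fun j hj => abs_cot_pi_mul_le hlam (hx j hj)) hc
    (fun j _ => (norm_e (x j)).le)
  have htwo := Finset.two_nsmul_sum_range_succ (fun j => e (x j)) n
  rw [sum_congr rfl fun j hj => hpair j (mem_range.1 hj), ← mul_sum, nsmul_eq_mul,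
    Nat.cast_ofNat] at htwo
  have : ‖(2 : ℂ) * ∑ j ∈ range (n + 1), e (x j)‖ ≤ 1 + 1 + 6 * (1 / (2 * lam)) := by
    rw [htwo]
    refine (norm_add_le _ _).trans (add_le_add ((norm_add_le _ _).trans ?_) ?_)
    · rw [norm_e, norm_e]
    · rwa [norm_mul, norm_neg, Complex.norm_I, one_mul]
  rw [norm_mul, Complex.norm_two] at this
  field_simp at this ⊢
  linarith

section Slopes

variable {F : ℝ → ℝ} {s : Set ℝ} {x : ℝ}

lemma sub_mem_Icc_of_deriv_mem_Icc (hs : Convex ℝ s) (hF : DifferentiableOn ℝ F s) {m m' : ℝ}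
    (hderiv : ∀ y ∈ s, deriv F y ∈ Set.Icc m m') (hx : x ∈ s) (hx1 : x + 1 ∈ s) :
    F (x + 1) - F x ∈ Set.Icc m m' := by
  have hF' := hF.mono interior_subset
  have h₁ := hs.mul_sub_le_image_sub_of_le_deriv hF.continuousOn hF'
    (fun y hy => (hderiv y (interior_subset hy)).1) x hx (x + 1) hx1 (by linarith)
  have h₂ := hs.image_sub_le_mul_sub_of_deriv_le hF.continuousOn hF'
    (fun y hy => (hderiv y (interior_subset hy)).2) x hx (x + 1) hx1 (by linarith)
  rw [add_sub_cancel_left, mul_one] at h₁ h₂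
  exact ⟨h₁, h₂⟩

lemma sub_le_sub_of_monotoneOn_deriv (hs : Convex ℝ s) (hF : DifferentiableOn ℝ F s)
    (hmono : MonotoneOn (deriv F) s) (hx : x ∈ s) (hx2 : x + 2 ∈ s) :
    F (x + 1) - F x ≤ F (x + 2) - F (x + 1) := by
  have := (hmono.mono interior_subset).convexOn_of_deriv hs hF.continuousOn
    (hF.mono interior_subset) |>.slope_mono_adjacent hx hx2 (lt_add_one x) (by linarith)
  rwa [add_sub_cancel_left, show x + 2 - (x + 1) = 1 by ring, div_one, div_one] at this

lemma sub_le_sub_of_antitoneOn_deriv (hs : Convex ℝ s) (hF : DifferentiableOn ℝ F s)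
    (hanti : AntitoneOn (deriv F) s) (hx : x ∈ s) (hx2 : x + 2 ∈ s) :
    F (x + 2) - F (x + 1) ≤ F (x + 1) - F x := by
  have := (hanti.mono interior_subset).concaveOn_of_deriv hs hF.continuousOn
    (hF.mono interior_subset) |>.slope_anti_adjacent hx hx2 (lt_add_one x) (by linarith)
  rwa [add_sub_cancel_left, show x + 2 - (x + 1) = 1 by ring, div_one, div_one] at this

end Slopes

theorem norm_sum_e_le_of_deriv_mem_Icc {F : ℝ → ℝ} {a b lam : ℝ} (hlam : 0 < lam)
    (hF : DifferentiableOn ℝ F (Set.Icc a b))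
    (hmono : MonotoneOn (deriv F) (Set.Icc a b) ∨ AntitoneOn (deriv F) (Set.Icc a b))
    (hderiv : ∀ x ∈ Set.Icc a b, deriv F x ∈ Set.Icc lam (1 - lam)) :
    ‖∑ n ∈ Finset.Icc ⌈a⌉ ⌊b⌋, e (F n)‖ ≤ 2 / lam := by
  rcases lt_or_ge ⌊b⌋ ⌈a⌉ with hempty | hab
  · rw [Finset.Icc_eq_empty_of_lt hempty, sum_empty, norm_zero]
    positivity
  obtain ⟨K, hK⟩ : ∃ K : ℕ, (⌊b⌋ + 1 - ⌈a⌉).toNat = K + 1 := ⟨(⌊b⌋ - ⌈a⌉).toNat, by omega⟩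
  set p : ℕ → ℝ := fun j => (⌈a⌉ : ℝ) + j
  have hp : ∀ j ≤ K, p j ∈ Set.Icc a b := fun j hj => by
    have hle : ⌈a⌉ + (j : ℤ) ≤ ⌊b⌋ := by omega
    have hle' : (⌈a⌉ : ℝ) + j ≤ ⌊b⌋ := by exact_mod_cast hle
    exact ⟨(Int.le_ceil a).trans (le_add_of_nonneg_right j.cast_nonneg),
      hle'.trans (Int.floor_le b)⟩
  have hp_succ : ∀ j, p (j + 1) = p j + 1 := fun j => by simp only [p]; push_cast; ring
  have hconv : Convex ℝ (Set.Icc a b) := convex_Icc a b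
  have hsum : ∑ n ∈ Finset.Icc ⌈a⌉ ⌊b⌋, e (F n) = ∑ j ∈ range (K + 1), e (F (p j)) := by
    rw [Int.Icc_eq_finset_map, sum_map, hK]
    simp [p]
  have hlam_half : lam ≤ 1 / 2 := by
    linarith [(hderiv _ (hp 0 K.zero_le)).1, (hderiv _ (hp 0 K.zero_le)).2]
  rw [hsum]
  refine (norm_sum_e_le_of_sub_mem_Icc (F ∘ p) K hlam (fun j hj => ?_) ?_).trans ?_
  · simp only [Function.comp, hp_succ]
    exact sub_mem_Icc_of_deriv_mem_Icc hconv hF hderiv (hp j hj.le) (hp_succ j ▸ hp (j + 1) hj)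
  · simp only [Function.comp, hp_succ, add_assoc, one_add_one_eq_two]
    rcases hmono with h | h
    · exact Or.inl fun j hj => sub_le_sub_of_monotoneOn_deriv hconv hF h (hp j (by omega))
        (by simpa only [hp_succ, add_assoc, one_add_one_eq_two] using hp (j + 2) (by omega))
    · exact Or.inr fun j hj => sub_le_sub_of_antitoneOn_deriv hconv hF h (hp j (by omega))
        (by simpa only [hp_succ, add_assoc, one_add_one_eq_two] using hp (j + 2) (by omega))
  · have : 1 ≤ 1 / (2 * lam) := by rw [le_div_iff₀ (by positivity)]; linarith
    calc 1 + 3 / (2 * lam) ≤ 1 / (2 * lam) + 3 / (2 * lam) := by gcongr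
      _ = 2 / lam := by field_simp; ring

lemma Set.OrdConnected.exists_int_forall_sub_mem_Icc {S : Set ℝ} (hS : S.OrdConnected) {lam : ℝ}
    (hlam : 0 < lam) (hdist : ∀ t ∈ S, ∀ n : ℤ, lam ≤ |t - n|) :
    ∃ k : ℤ, ∀ t ∈ S, t - k ∈ Set.Icc lam (1 - lam) := by
  rcases S.eq_empty_or_nonempty with rfl | ⟨t₀, ht₀⟩
  · exact ⟨0, fun t ht => ht.elim⟩
  have hZ : ∀ n : ℤ, (n : ℝ) ∉ S := fun n hn => by
    have := hdist n hn n
    rw [sub_self, abs_zero] at this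
    linarith
  refine ⟨⌊t₀⌋, fun t ht => ?_⟩
  have hlow : (⌊t₀⌋ : ℝ) < t := by
    by_contra! h
    exact hZ _ (hS.out ht ht₀ ⟨h, Int.floor_le t₀⟩)
  have hup : t < ⌊t₀⌋ + 1 := by
    by_contra! h
    exact hZ (⌊t₀⌋ + 1)
      (hS.out ht₀ ht ⟨by exact_mod_cast (Int.lt_floor_add_one t₀).le, by exact_mod_cast h⟩)
  have h₁ := hdist t ht ⌊t₀⌋
  have h₂ := hdist t ht (⌊t₀⌋ + 1)
  rw [abs_of_pos (by linarith)] at h₁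
  rw [Int.cast_add, Int.cast_one, abs_of_neg (by linarith)] at h₂
  exact ⟨h₁, by linarith⟩

/-- Kusmin–Landau first derivative test: there is an absolute constant `C > 0` such that
for every interval `[a,b]`, every `C¹` function `f` with monotone derivative satisfying
`λ₁ ≤ dist(f'(x), ℤ)` on `[a,b]`, one has `|∑_{n ∈ [a,b] ∩ ℤ} e(f(n))| ≤ C / λ₁`. -/
theorem stmt11 : ∃ C : ℝ, 0 < C ∧
    ∀ (a b : ℝ) (f : ℝ → ℝ) (lam : ℝ), 0 < lam →
      ContDiff ℝ 1 f →
      (MonotoneOn (deriv f) (Set.Icc a b) ∨ AntitoneOn (deriv f) (Set.Icc a b)) →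
      (∀ x ∈ Set.Icc a b, ∀ n : ℤ, lam ≤ |deriv f x - n|) →
      ‖∑ n ∈ Finset.Icc ⌈a⌉ ⌊b⌋, e (f n)‖ ≤ C / lam := by
  refine ⟨2, two_pos, fun a b f lam hlam hf hmono hdist => ?_⟩
  have hf_diff : Differentiable ℝ f := hf.differentiable one_ne_zero
  obtain ⟨k, hk⟩ := (isPreconnected_Icc.image _ (hf.continuous_deriv le_rfl).continuousOn
    ).ordConnected.exists_int_forall_sub_mem_Icc hlam (Set.forall_mem_image.2 hdist)
  set F : ℝ → ℝ := fun x => f x - k * x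
  have hF_deriv : deriv F = fun x => deriv f x - k := funext fun x => by
    have := ((hf_diff x).hasDerivAt.sub ((hasDerivAt_id x).const_mul (k : ℝ))).deriv
    rwa [mul_one] at this
  have hsum : ∑ n ∈ Finset.Icc ⌈a⌉ ⌊b⌋, e (f n) = ∑ n ∈ Finset.Icc ⌈a⌉ ⌊b⌋, e (F n) :=
    sum_congr rfl fun n _ => by rw [← e_sub_intCast (f n) (k * n), Int.cast_mul]
  rw [hsum]
  refine norm_sum_e_le_of_deriv_mem_Icc hlam
    (hf_diff.sub (differentiable_id.const_mul (k : ℝ))).differentiableOn ?_ ?_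
  · rw [hF_deriv]
    simp only [sub_eq_add_neg]
    exact hmono.imp (·.add_const _) (·.add_const _)
  · rw [hF_deriv]
    exact fun x hx => hk _ (Set.mem_image_of_mem _ hx)
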